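/- arXiv:1201.0447 — 10 statements merged into one kernel-verified Lean document; each statement's English description precedes it below -/
import Mathlib

section
/- Every involutive automorphism τ (τ² = Id, τ ≠ Id) of the Heisenberg Lie algebra 𝔥₃ is, in the basis X₁,X₂,X₃, one of: τ₁(α₃,α₆) = [[−1,0,0],[α₃,1,0],[α₃α₆/2,α₆,−1]]; τ₂(α₃,α₅) = [[1,0,0],[α₃,−1,0],[α₅,0,−1]]; τ₃(α₁,α₂,α₆) with α₂ ≠ 0, equal to [[α₁,α₂,0],[(1−α₁²)/α₂,−α₁,0],[(1+α₁)α₆/α₂,α₆,−1]]; or τ₄(α₅,α₆) = [[−1,0,0],[0,−1,0],[α₅,α₆,1]]. -/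
/-- The Lie bracket of the 3-dimensional Heisenberg Lie algebra `𝔥₃` in the
basis `X₁, X₂, X₃` with `[X₁,X₂] = X₃` and `X₃` central, written in coordinates. -/
def heisBracket (x y : Fin 3 → ℝ) : Fin 3 → ℝ :=
  ![0, 0, x 0 * y 1 - x 1 * y 0]

/-- A matrix `M` (in the basis `X₁,X₂,X₃`) is a Lie algebra automorphism of `𝔥₃`
iff it is invertible and preserves the bracket. -/
def IsHeisAut (M : Matrix (Fin 3) (Fin 3) ℝ) : Prop :=
  M.det ≠ 0 ∧ ∀ x y : Fin 3 → ℝ,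
    M.mulVec (heisBracket x y) = heisBracket (M.mulVec x) (M.mulVec y)

noncomputable def tau1 (a3 a6 : ℝ) : Matrix (Fin 3) (Fin 3) ℝ :=
  !![-1, 0, 0; a3, 1, 0; a3 * a6 / 2, a6, -1]

def tau2 (a3 a5 : ℝ) : Matrix (Fin 3) (Fin 3) ℝ :=
  !![1, 0, 0; a3, -1, 0; a5, 0, -1]

noncomputable def tau3 (a1 a2 a6 : ℝ) : Matrix (Fin 3) (Fin 3) ℝ :=
  !![a1, a2, 0; (1 - a1 ^ 2) / a2, -a1, 0; (1 + a1) * a6 / a2, a6, -1]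

def tau4 (a5 a6 : ℝ) : Matrix (Fin 3) (Fin 3) ℝ :=
  !![-1, 0, 0; 0, -1, 0; a5, a6, 1]

/-- Every involutive automorphism `τ` (`τ² = Id`, `τ ≠ Id`) of `𝔥₃` is
one of `τ₁(α₃,α₆)`, `τ₂(α₃,α₅)`, `τ₃(α₁,α₂,α₆)` with `α₂ ≠ 0`, or `τ₄(α₅,α₆)`. -/
theorem heis_involutive_classification (M : Matrix (Fin 3) (Fin 3) ℝ)
    (hM : IsHeisAut M) (h2 : M * M = 1) (hne : M ≠ 1) :
    (∃ a3 a6 : ℝ, M = tau1 a3 a6) ∨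
    (∃ a3 a5 : ℝ, M = tau2 a3 a5) ∨
    (∃ a1 a2 a6 : ℝ, a2 ≠ 0 ∧ M = tau3 a1 a2 a6) ∨
    (∃ a5 a6 : ℝ, M = tau4 a5 a6) := by
  obtain ⟨-, hbr⟩ := hM
  have hb := hbr ![1,0,0] ![0,1,0]
  have h02 := congr_fun hb 0
  have h12 := congr_fun hb 1
  have h22 := congr_fun hb 2
  simp [heisBracket, Matrix.mulVec, dotProduct, Fin.sum_univ_three] at h02 h12 h22
  have E : ∀ i j, (M * M) i j = (1 : Matrix (Fin 3) (Fin 3) ℝ) i j := by rw [h2]; simp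
  have E00 := E 0 0; have E01 := E 0 1; have E10 := E 1 0; have E11 := E 1 1
  have E20 := E 2 0; have E21 := E 2 1; have E22 := E 2 2
  simp [Matrix.mul_apply, Fin.sum_univ_three, Matrix.one_apply, h02, h12] at E00 E01 E10 E11 E20 E21 E22
  rcases mul_self_eq_one_iff.mp E22 with hr | hr
  · -- r = 1 case : tau4 or contradiction
    have htr : M 0 0 + M 1 1 ≠ 0 := by
      intro h
      have hd : M 1 1 = -(M 0 0) := by linarith
      rw [hr, hd] at h22
      nlinarith [E00]
    have hbz : M 0 1 = 0 := by
      rcases mul_eq_zero.mp (show M 0 1 * (M 0 0 + M 1 1) = 0 by nlinarith [E01]) with h | h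
      · exact h
      · exact absurd h htr
    have hcz : M 1 0 = 0 := by
      rcases mul_eq_zero.mp (show M 1 0 * (M 0 0 + M 1 1) = 0 by nlinarith [E10]) with h | h
      · exact h
      · exact absurd h htr
    have ha2 : M 0 0 * M 0 0 = 1 := by nlinarith [E00]
    rcases mul_self_eq_one_iff.mp ha2 with ha | ha
    · -- a = 1 : M = 1, contradiction
      exfalso
      have hd : M 1 1 = 1 := by rw [hr, ha, hbz] at h22; linarith
      have hp : M 2 0 = 0 := by rw [ha, hcz, hr] at E20; linarith
      have hq : M 2 1 = 0 := by rw [hd, hbz, hr] at E21; linarith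
      apply hne
      ext i j
      fin_cases i <;> fin_cases j <;>
        simp [ha, hbz, hcz, hd, hp, hq, h02, h12, hr, Matrix.one_apply]
    · have hd : M 1 1 = -1 := by rw [hr, ha, hbz] at h22; linarith
      refine Or.inr (Or.inr (Or.inr ⟨M 2 0, M 2 1, ?_⟩))
      ext i j
      fin_cases i <;> fin_cases j <;>
        simp [tau4, ha, hbz, hcz, hd, h02, h12, hr]
  · -- r = -1 case
    by_cases hb0 : M 0 1 = 0
    · have ha2 : M 0 0 * M 0 0 = 1 := by rw [hb0] at E00; linarith
      rcases mul_self_eq_one_iff.mp ha2 with ha | ha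
      · -- a = 1 : tau2
        have hd : M 1 1 = -1 := by rw [hr, ha, hb0] at h22; linarith
        have hq : M 2 1 = 0 := by rw [hd, hb0, hr] at E21; linarith
        refine Or.inr (Or.inl ⟨M 1 0, M 2 0, ?_⟩)
        ext i j
        fin_cases i <;> fin_cases j <;>
          simp [tau2, ha, hb0, hd, hq, h02, h12, hr]
      · -- a = -1 : tau1
        have hd : M 1 1 = 1 := by rw [hr, ha, hb0] at h22; linarith
        have hp : M 2 0 = M 1 0 * M 2 1 / 2 := by rw [ha, hr] at E20; linarith
        refine Or.inl ⟨M 1 0, M 2 1, ?_⟩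
        ext i j
        fin_cases i <;> fin_cases j <;>
          simp [tau1, ha, hb0, hd, hp, h02, h12, hr]
    · -- b ≠ 0 : tau3
      have hd : M 1 1 = -(M 0 0) := by
        rcases mul_eq_zero.mp (show M 0 1 * (M 0 0 + M 1 1) = 0 by nlinarith [E01]) with h | h
        · exact absurd h hb0
        · linarith
      have hc : M 1 0 = (1 - M 0 0 ^ 2) / M 0 1 := by
        rw [eq_div_iff hb0]
        rw [hr, hd] at h22
        linear_combination h22
      have hp : M 2 0 = (1 + M 0 0) * M 2 1 / M 0 1 := by
        rw [eq_div_iff hb0]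
        rw [hd, hr] at E21
        linear_combination E21
      refine Or.inr (Or.inr (Or.inl ⟨M 0 0, M 0 1, M 2 1, hb0, ?_⟩))
      ext i j
      fin_cases i <;> fin_cases j <;>
        simp [tau3, hd, hc, hp, h02, h12, hr]
end

section
/- If τ is a real automorphism of the Heisenberg Lie algebra 𝔥₃ of order 3 (τ³ = Id, τ ≠ Id) with matrix entries α₂, α₃ as off-diagonal entries of the 2×2 block, then α₂α₃ ≤ −3/4. -/
/-- If `τ` is a real automorphism of `𝔥₃` of order 3 (`τ³ = Id`, `τ ≠ Id`),
then the off-diagonal entries `α₂, α₃` of its 2×2 block satisfy `α₂α₃ ≤ -3/4`. -/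
theorem heisAut_order_three_offdiag (M : Matrix (Fin 3) (Fin 3) ℝ)
    (h : IsHeisAut M) (h3 : M ^ 3 = 1) (hne : M ≠ 1) :
    M 0 1 * M 1 0 ≤ -(3 / 4) := by
  obtain ⟨hdet, hb⟩ := h
  have key := hb ![1,0,0] ![0,1,0]
  have k0 := congrFun key 0
  have k1 := congrFun key 1
  have k2 := congrFun key 2
  simp [heisBracket, Matrix.mulVec, dotProduct, Fin.sum_univ_three] at k0 k1 k2
  have E : ∀ i j : Fin 3, (M*M*M) i j = (1 : Matrix (Fin 3) (Fin 3) ℝ) i j := by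
    intro i j
    have : M^3 = M*M*M := by rw [pow_succ, pow_succ, pow_one]
    rw [← this, h3]
  have E00 := E 0 0; have E01 := E 0 1; have E10 := E 1 0; have E11 := E 1 1
  have E20 := E 2 0; have E21 := E 2 1; have E22 := E 2 2
  simp [Matrix.mul_apply, Fin.sum_univ_three, Matrix.one_apply, k0, k1, k2] at E00 E01 E10 E11 E20 E21 E22
  set a := M 0 0; set b := M 0 1; set c := M 1 0; set d := M 1 1
  -- determinant of 2x2 block equals 1
  have hD : a * d - c * b = 1 := by
    have hfac : (a*d - c*b - 1) * ((a*d - c*b + 1/2)^2 + 3/4) = 0 := by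
      linear_combination E22
    have hpos : ((a*d - c*b + 1/2)^2 + 3/4) > 0 := by positivity
    have := mul_eq_zero.mp hfac
    rcases this with h' | h'
    · linarith
    · linarith
  -- trace equation
  have ht3 : (a + d + 1)^2 * (a + d - 2) = 0 := by
    linear_combination E00 + E11 + 3*(a+d)*hD
  rcases mul_eq_zero.mp ht3 with ht | ht2
  · -- trace = -1 case
    have ht' : a + d = -1 := by
      have := sq_eq_zero_iff.mp ht
      linarith
    nlinarith [sq_nonneg (a - d)]
  · -- trace = 2 case: show M = 1, contradiction
    exfalso
    have ht2' : a + d = 2 := by linarith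
    have ha : a = 1 := by
      linear_combination E00/3 + ((2*a+d)/3)*hD - ((a*d+a^2+2*a-1)/3)*ht2
    have hd : d = 1 := by linarith
    have hb0 : b = 0 := by
      linear_combination E01/3 + (b/3)*hD - (b*(a+d+2)/3)*ht2
    have hc0 : c = 0 := by
      linear_combination E10/3 + (c/3)*hD - (c*(a+d+2)/3)*ht2
    rw [ha, hd, hb0, hc0] at E20 E21 k2
    ring_nf at E20 E21
    have he : M 2 0 = 0 := by linarith
    have hf : M 2 1 = 0 := by linarith
    apply hne
    ext i j
    fin_cases i <;> fin_cases j <;>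
      first
      | exact ha | exact hb0 | exact hc0 | exact hd
      | simp [Matrix.one_apply, he, hf, k0, k1, k2]
end

section
/- For any α₃,α₅,α₆ ∈ ℝ, the composition τ₁(α₃,α₆) ∘ τ₂(−α₃,α₅) equals τ₄(−α₃α₆/2 − α₅, −α₆), where τ₁(α₃,α₆) = [[−1,0,0],[α₃,1,0],[α₃α₆/2,α₆,−1]], τ₂(α₃',α₅) = [[1,0,0],[α₃',−1,0],[α₅,0,−1]], τ₄(a,b) = [[−1,0,0],[0,−1,0],[a,b,1]]. Consequently the set Γ₇(α₃,α₅,α₆) = {Id, τ₁(α₃,α₆), τ₂(−α₃,α₅), τ₄(−α₃α₆/2 − α₅, −α₆)} is a subgroup of Aut(𝔥₃) isomorphic to ℤ₂ × ℤ₂. -/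
set_option linter.unnecessarySeqFocus false

lemma tau1_sq (a3 a6 : ℝ) : tau1 a3 a6 * tau1 a3 a6 = 1 := by
  ext i j
  fin_cases i <;> fin_cases j <;>
    simp [tau1, Matrix.mul_apply, Fin.sum_univ_three, Matrix.one_apply] <;> ring

lemma tau2_sq (a3 a5 : ℝ) : tau2 a3 a5 * tau2 a3 a5 = 1 := by
  ext i j
  fin_cases i <;> fin_cases j <;>
    simp [tau2, Matrix.mul_apply, Fin.sum_univ_three, Matrix.one_apply] <;> ring

lemma tau12 (a3 a5 a6 : ℝ) : tau1 a3 a6 * tau2 (-a3) a5 = tau4 (-a3 * a6 / 2 - a5) (-a6) := by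
  ext i j
  fin_cases i <;> fin_cases j <;>
    simp [tau1, tau2, tau4, Matrix.mul_apply, Fin.sum_univ_three] <;> ring

lemma tau21 (a3 a5 a6 : ℝ) : tau2 (-a3) a5 * tau1 a3 a6 = tau4 (-a3 * a6 / 2 - a5) (-a6) := by
  ext i j
  fin_cases i <;> fin_cases j <;>
    simp [tau1, tau2, tau4, Matrix.mul_apply, Fin.sum_univ_three] <;> ring

/-- homomorphism from `Multiplicative (ZMod 2)` determined by a square root of 1 -/
def homOfSq {G : Type*} [Group G] (u : G) (h : u * u = 1) :
    Multiplicative (ZMod 2) →* G where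
  toFun x := if x = 1 then 1 else u
  map_one' := by simp
  map_mul' x y := by
    have key : ∀ z : Multiplicative (ZMod 2), z = 1 ∨ z = Multiplicative.ofAdd 1 := by
      decide
    rcases key x with hx | hx <;> rcases key y with hy | hy <;>
      subst hx <;> subst hy
    · simp
    · simp
    · simp
    · show (if (Multiplicative.ofAdd 1 * Multiplicative.ofAdd 1 : Multiplicative (ZMod 2)) = 1
          then (1 : G) else u) = _
      rw [if_pos (show (Multiplicative.ofAdd 1 * Multiplicative.ofAdd 1 :
          Multiplicative (ZMod 2)) = 1 by decide)]
      show (1 : G) = (if (Multiplicative.ofAdd 1 : Multiplicative (ZMod 2)) = 1 then 1 else u) *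
        (if (Multiplicative.ofAdd 1 : Multiplicative (ZMod 2)) = 1 then 1 else u)
      rw [if_neg (show ¬(Multiplicative.ofAdd 1 : Multiplicative (ZMod 2)) = 1 by decide), h]

lemma zmod2_cases (z : Multiplicative (ZMod 2)) : z = 1 ∨ z = Multiplicative.ofAdd 1 := by
  revert z; decide

lemma heisAut_of (M : Matrix (Fin 3) (Fin 3) ℝ)
    (hdet : M.det ≠ 0)
    (h : ∀ x y : Fin 3 → ℝ,
      M.mulVec (heisBracket x y) = heisBracket (M.mulVec x) (M.mulVec y)) :
    IsHeisAut M := ⟨hdet, h⟩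

/-- `τ₁(α₃,α₆) ∘ τ₂(-α₃,α₅) = τ₄(-α₃α₆/2 - α₅, -α₆)`, and
`Γ₇(α₃,α₅,α₆) = {Id, τ₁(α₃,α₆), τ₂(-α₃,α₅), τ₄(-α₃α₆/2 - α₅, -α₆)}` is a
subgroup of `Aut(𝔥₃)` isomorphic to `ℤ₂ × ℤ₂`. -/
theorem gamma7_subgroup (a3 a5 a6 : ℝ) :
    tau1 a3 a6 * tau2 (-a3) a5 = tau4 (-a3 * a6 / 2 - a5) (-a6) ∧
    ∃ H : Subgroup (Matrix (Fin 3) (Fin 3) ℝ)ˣ,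
      Units.val '' (H : Set (Matrix (Fin 3) (Fin 3) ℝ)ˣ) =
        {1, tau1 a3 a6, tau2 (-a3) a5, tau4 (-a3 * a6 / 2 - a5) (-a6)} ∧
      (∀ u ∈ H, IsHeisAut (u : Matrix (Fin 3) (Fin 3) ℝ)) ∧
      Nonempty (H ≃* (Multiplicative (ZMod 2) × Multiplicative (ZMod 2))) := by
  refine ⟨tau12 a3 a5 a6, ?_⟩
  set u1 : (Matrix (Fin 3) (Fin 3) ℝ)ˣ :=
    ⟨tau1 a3 a6, tau1 a3 a6, tau1_sq a3 a6, tau1_sq a3 a6⟩ with hu1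
  set u2 : (Matrix (Fin 3) (Fin 3) ℝ)ˣ :=
    ⟨tau2 (-a3) a5, tau2 (-a3) a5, tau2_sq (-a3) a5, tau2_sq (-a3) a5⟩ with hu2
  have hsq1 : u1 * u1 = 1 := Units.ext (tau1_sq a3 a6)
  have hsq2 : u2 * u2 = 1 := Units.ext (tau2_sq (-a3) a5)
  have hcomm : ∀ (m n : Multiplicative (ZMod 2)),
      Commute ((homOfSq u1 hsq1) m) ((homOfSq u2 hsq2) n) := by
    intro m n
    rcases zmod2_cases m with hm | hm <;> rcases zmod2_cases n with hn | hn <;>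
      subst hm <;> subst hn <;>
      simp [homOfSq, Commute, SemiconjBy]
    · exact Units.ext ((tau12 a3 a5 a6).trans (tau21 a3 a5 a6).symm)
  set φ := (homOfSq u1 hsq1).noncommCoprod (homOfSq u2 hsq2) hcomm with hφ
  -- values of φ
  have hval : ∀ z : Multiplicative (ZMod 2) × Multiplicative (ZMod 2),
      φ z = (if z.1 = 1 then 1 else u1) * (if z.2 = 1 then 1 else u2) := by
    intro z; rfl
  have hne : (Multiplicative.ofAdd (1 : ZMod 2)) ≠ 1 := by decide
  have hφ11 : φ (1, 1) = 1 := by rw [hval]; simp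
  have hφ21 : φ (Multiplicative.ofAdd 1, 1) = u1 := by rw [hval]; simp [if_neg hne]
  have hφ12 : φ (1, Multiplicative.ofAdd 1) = u2 := by rw [hval]; simp [if_neg hne]
  have hφ22 : φ (Multiplicative.ofAdd 1, Multiplicative.ofAdd 1) = u1 * u2 := by
    rw [hval]; simp [if_neg hne]
  have hu1ne : (u1 : Matrix (Fin 3) (Fin 3) ℝ) ≠ 1 := by
    intro h
    have := congrFun (congrFun h 0) 0
    simp [hu1, tau1, Matrix.one_apply] at this
    norm_num at this
  have hu2ne : (u2 : Matrix (Fin 3) (Fin 3) ℝ) ≠ 1 := by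
    intro h
    have := congrFun (congrFun h 1) 1
    simp [hu2, tau2, Matrix.one_apply] at this
    norm_num at this
  have hu12ne : ((u1 * u2 : (Matrix (Fin 3) (Fin 3) ℝ)ˣ) : Matrix (Fin 3) (Fin 3) ℝ) ≠ 1 := by
    intro h
    have h' : tau4 (-a3 * a6 / 2 - a5) (-a6) = 1 := by
      rw [← tau12 a3 a5 a6]; exact h
    have := congrFun (congrFun h' 0) 0
    simp [tau4, Matrix.one_apply] at this
    norm_num at this
  have hinj : Function.Injective φ := by
    refine (injective_iff_map_eq_one φ).2 ?_
    rintro ⟨x, y⟩ h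
    rcases zmod2_cases x with hx | hx <;> rcases zmod2_cases y with hy | hy <;>
        subst hx <;> subst hy
    · rfl
    · rw [hφ12] at h
      exact absurd (congrArg Units.val h) hu2ne
    · rw [hφ21] at h
      exact absurd (congrArg Units.val h) hu1ne
    · rw [hφ22] at h
      exact absurd (congrArg Units.val h) hu12ne
  refine ⟨φ.range, ?_, ?_, ⟨(MonoidHom.ofInjective hinj).symm⟩⟩
  · ext M
    constructor
    · rintro ⟨u, ⟨z, rfl⟩, rfl⟩
      obtain ⟨x, y⟩ := z
      rcases zmod2_cases x with hx | hx <;> rcases zmod2_cases y with hy | hy <;>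
        subst hx <;> subst hy
      · rw [hφ11]; left; rfl
      · rw [hφ12]; right; right; left; rfl
      · rw [hφ21]; right; left; rfl
      · rw [hφ22]; right; right; right
        rw [Units.val_mul]
        exact tau12 a3 a5 a6
    · rintro (rfl | rfl | rfl | rfl)
      · exact ⟨1, ⟨1, map_one φ⟩, rfl⟩
      · exact ⟨u1, ⟨(Multiplicative.ofAdd 1, 1), hφ21⟩, rfl⟩
      · exact ⟨u2, ⟨(1, Multiplicative.ofAdd 1), hφ12⟩, rfl⟩
      · exact ⟨u1 * u2, ⟨(Multiplicative.ofAdd 1, Multiplicative.ofAdd 1), hφ22⟩,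
          (Units.val_mul u1 u2).trans (tau12 a3 a5 a6)⟩
  · -- Heisenberg automorphism property
    have haut1 : IsHeisAut (tau1 a3 a6) := by
      constructor
      · simp [tau1, Matrix.det_fin_three]
      · intro x y
        funext i
        fin_cases i <;>
          simp [tau1, heisBracket, Matrix.mulVec, dotProduct, Fin.sum_univ_three] <;> ring
    have haut2 : IsHeisAut (tau2 (-a3) a5) := by
      constructor
      · simp [tau2, Matrix.det_fin_three]
      · intro x y
        funext i
        fin_cases i <;>
          simp [tau2, heisBracket, Matrix.mulVec, dotProduct, Fin.sum_univ_three] <;> ring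
    have haut4 : IsHeisAut (tau4 (-a3 * a6 / 2 - a5) (-a6)) := by
      constructor
      · simp [tau4, Matrix.det_fin_three]
      · intro x y
        funext i
        fin_cases i <;>
          simp [tau4, heisBracket, Matrix.mulVec, dotProduct, Fin.sum_univ_three] <;> ring
    have haut_one : IsHeisAut (1 : Matrix (Fin 3) (Fin 3) ℝ) := by
      constructor
      · simp
      · intro x y; simp
    rintro u ⟨z, rfl⟩
    obtain ⟨x, y⟩ := z
    rcases zmod2_cases x with hx | hx <;> rcases zmod2_cases y with hy | hy <;>
      subst hx <;> subst hy
    · rw [hφ11]; exact haut_one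
    · rw [hφ12]; exact haut2
    · rw [hφ21]; exact haut1
    · rw [hφ22, Units.val_mul]
      have : (u1 : Matrix (Fin 3) (Fin 3) ℝ) * u2 = tau4 (-a3 * a6 / 2 - a5) (-a6) :=
        tau12 a3 a5 a6
      rw [this]
      exact haut4
end

section
/- Two automorphisms τ₃(α₁,α₂,α₆) and τ₃(α₁',α₂',α₆') (with α₂,α₂' ≠ 0) of the Heisenberg Lie algebra that are distinct commute if and only if α₁' = −α₁ and α₂' = −α₂. -/
/-! The upper left `2 × 2` block of `τ₃(α₁,α₂,α₆)` is a trace-zero involution. Comparing the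
entries `(0,1)` and `(0,0)` of the two products shows that the blocks of two commuting `τ₃`'s
are proportional, `α₁α₂' = α₂α₁'`, and then that `α₂'² = α₂²`, so the blocks are equal or opposite.
If they are equal, the entry `(2,1)` of the two products is `α₆ - α₆'` and `α₆' - α₆`,
so the matrices coincide. Conversely, opposite parameters give commuting matrices by direct
computation. -/

section
variable {a1 a2 a6 b1 b2 b6 : ℝ}

lemma tau3_mul_tau3_apply_zero_zero :
    (tau3 a1 a2 a6 * tau3 b1 b2 b6) 0 0 = a1 * b1 + a2 * ((1 - b1 ^ 2) / b2) := by
  simp [tau3, Matrix.mul_apply, Fin.sum_univ_three]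

lemma tau3_mul_tau3_apply_zero_one :
    (tau3 a1 a2 a6 * tau3 b1 b2 b6) 0 1 = a1 * b2 - a2 * b1 := by
  simp [tau3, Matrix.mul_apply, Fin.sum_univ_three]; ring

lemma tau3_mul_tau3_apply_two_one :
    (tau3 a1 a2 a6 * tau3 b1 b2 b6) 2 1 = (1 + a1) * a6 / a2 * b2 - a6 * b1 - b6 := by
  simp [tau3, Matrix.mul_apply, Fin.sum_univ_three]; ring

lemma tau3_commute_tau3_neg (ha2 : a2 ≠ 0) : Commute (tau3 a1 a2 a6) (tau3 (-a1) (-a2) b6) := by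
  ext i j
  fin_cases i <;> fin_cases j <;> simp [tau3, Matrix.mul_apply, Fin.sum_univ_three] <;>
    field_simp <;> ring

lemma tau3_params_eq_or_neg_of_commute (ha2 : a2 ≠ 0) (hb2 : b2 ≠ 0)
    (h : Commute (tau3 a1 a2 a6) (tau3 b1 b2 b6)) :
    (b1 = a1 ∧ b2 = a2 ∧ b6 = a6) ∨ (b1 = -a1 ∧ b2 = -a2) := by
  have entry (i j : Fin 3) := congrFun (congrFun h.eq i) j
  have h01 := entry 0 1
  have h00 := entry 0 0
  have h21 := entry 2 1
  simp only [tau3_mul_tau3_apply_zero_zero, tau3_mul_tau3_apply_zero_one,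
    tau3_mul_tau3_apply_two_one] at h01 h00 h21
  have hprop : a1 * b2 = a2 * b1 := by linarith
  have hdet : a2 ^ 2 * (1 - b1 ^ 2) = b2 ^ 2 * (1 - a1 ^ 2) := by
    field_simp at h00
    linear_combination h00
  have hsq : (b2 - a2) * (b2 + a2) = 0 := by
    linear_combination (a1 * b2 + a2 * b1) * hprop - hdet
  rcases mul_eq_zero.1 hsq with hsub | hadd
  · obtain rfl : b2 = a2 := by linarith
    obtain rfl : b1 = a1 := mul_left_cancel₀ ha2 (by linarith)
    field_simp at h21
    exact Or.inl ⟨rfl, rfl, by linarith⟩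
  · obtain rfl : b2 = -a2 := by linarith
    exact Or.inr ⟨mul_left_cancel₀ ha2 (by linarith), rfl⟩

end

/-- Two distinct automorphisms `τ₃(α₁,α₂,α₆)` and `τ₃(α₁',α₂',α₆')` (with
`α₂, α₂' ≠ 0`) commute iff `α₁' = -α₁` and `α₂' = -α₂`. -/
theorem tau3_commute_iff (a1 a2 a6 b1 b2 b6 : ℝ) (ha2 : a2 ≠ 0) (hb2 : b2 ≠ 0)
    (hne : tau3 a1 a2 a6 ≠ tau3 b1 b2 b6) :
    tau3 a1 a2 a6 * tau3 b1 b2 b6 = tau3 b1 b2 b6 * tau3 a1 a2 a6 ↔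
      b1 = -a1 ∧ b2 = -a2 := by
  constructor
  · intro h
    rcases tau3_params_eq_or_neg_of_commute ha2 hb2 h with ⟨rfl, rfl, rfl⟩ | hneg
    · exact absurd rfl hne
    · exact hneg
  · rintro ⟨rfl, rfl⟩
    exact tau3_commute_tau3_neg ha2
end

section
/- Any involutive automorphism σ of the real Heisenberg Lie algebra 𝔥₃ commuting with an automorphism τ of order 3 must act as −Id on 𝔥₃ modulo its center. -/
lemma heis_struct (M : Matrix (Fin 3) (Fin 3) ℝ) (h : IsHeisAut M) :
    M 0 2 = 0 ∧ M 1 2 = 0 ∧ M 2 2 = M 0 0 * M 1 1 - M 0 1 * M 1 0 := by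
  obtain ⟨-, hb⟩ := h
  have h' := hb ![1,0,0] ![0,1,0]
  have h0 := congrFun h' 0
  have h1 := congrFun h' 1
  have h2 := congrFun h' 2
  simp [heisBracket, Matrix.mulVec, dotProduct, Fin.sum_univ_three] at h0 h1 h2
  exact ⟨h0, h1, by linarith [h2]⟩

set_option maxHeartbeats 1000000 in
/-- Any involutive automorphism of `𝔥₃` commuting with an automorphism of
order 3 must be of the form `τ₄(α₅,α₆)`, i.e. it acts as `-Id` on `𝔥₃` modulo
its center. -/
theorem involution_commuting_with_order_three (σ τ : Matrix (Fin 3) (Fin 3) ℝ)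
    (hσ : IsHeisAut σ) (hσ2 : σ * σ = 1) (hσne : σ ≠ 1)
    (hτ : IsHeisAut τ) (hτ3 : τ ^ 3 = 1) (hτne : τ ≠ 1)
    (hcomm : σ * τ = τ * σ) :
    ∃ a5 a6 : ℝ, σ = tau4 a5 a6 := by
  obtain ⟨hs02, hs12, hs22⟩ := heis_struct σ hσ
  obtain ⟨ht02, ht12, ht22⟩ := heis_struct τ hτ
  have hτ33 : τ * τ * τ = 1 := by
    have := hτ3; rw [pow_succ, pow_succ, pow_one] at this; exact this
  have e00 := congrFun (congrFun hτ33 0) 0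
  have e01 := congrFun (congrFun hτ33 0) 1
  have e10 := congrFun (congrFun hτ33 1) 0
  have e20 := congrFun (congrFun hτ33 2) 0
  have e21 := congrFun (congrFun hτ33 2) 1
  have e22 := congrFun (congrFun hτ33 2) 2
  have f00 := congrFun (congrFun hσ2 0) 0
  have f01 := congrFun (congrFun hσ2 0) 1
  have f10 := congrFun (congrFun hσ2 1) 0
  have f11 := congrFun (congrFun hσ2 1) 1
  have f20 := congrFun (congrFun hσ2 2) 0
  have f21 := congrFun (congrFun hσ2 2) 1
  have g1 := congrFun (congrFun hcomm 0) 0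
  have g2 := congrFun (congrFun hcomm 0) 1
  have g3 := congrFun (congrFun hcomm 1) 0
  simp only [Matrix.mul_apply, Fin.sum_univ_three, Matrix.one_apply, ht02, ht12, ht22,
    hs02, hs12, hs22, show ((2:Fin 3) = 0) = False by simp, show ((2:Fin 3) = 1) = False by simp,
    show ((0:Fin 3) = 0) = True by simp, show ((1:Fin 3) = 1) = True by simp,
    show ((0:Fin 3) = 1) = False by simp, show ((1:Fin 3) = 0) = False by simp,
    if_true, if_false] at e00 e01 e10 e20 e21 e22 f00 f01 f10 f11 f20 f21 g1 g2 g3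
  -- determinant of τ's 2×2 block is 1
  have hδ : τ 0 0 * τ 1 1 - τ 0 1 * τ 1 0 = 1 := by
    set D := τ 0 0 * τ 1 1 - τ 0 1 * τ 1 0 with hD
    have hfac : (D - 1) * (D^2 + D + 1) = 0 := by linear_combination e22
    have hexp : (2*D+1)^2 = 4*D^2 + 4*D + 1 := by ring
    have hpos : 0 < D^2 + D + 1 := by linarith [sq_nonneg (2*D+1), hexp]
    rcases mul_eq_zero.1 hfac with h|h
    · linarith
    · linarith
  -- trace of τ's 2×2 block is -1
  have htr : τ 0 0 + τ 1 1 = -1 := by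
    by_cases ht : τ 0 0 + τ 1 1 = -1
    · exact ht
    exfalso
    have hq1 : τ 0 1 * ((τ 0 0 + τ 1 1)^2 - 1) = 0 := by linear_combination e01 + (τ 0 1) * hδ
    have hr1 : τ 1 0 * ((τ 0 0 + τ 1 1)^2 - 1) = 0 := by linear_combination e10 + (τ 1 0) * hδ
    by_cases ht2 : (τ 0 0 + τ 1 1)^2 = 1
    · have ht1 : τ 0 0 + τ 1 1 = 1 := by
        have h' : (τ 0 0 + τ 1 1 - 1) * (τ 0 0 + τ 1 1 + 1) = 0 := by linear_combination ht2
        rcases mul_eq_zero.1 h' with h|h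
        · linarith
        · exact absurd (by linarith) ht
      have : (0:ℝ) = 2 := by
        linear_combination e00 + (2*τ 0 0 + τ 1 1) * hδ
          - (τ 0 0 * τ 1 1 + τ 0 0^2 + τ 0 0 - 1) * ht1
      norm_num at this
    · have hq : τ 0 1 = 0 := by
        rcases mul_eq_zero.1 hq1 with h|h
        · exact h
        · exact absurd (by linarith : (τ 0 0 + τ 1 1)^2 = 1) ht2
      have hr : τ 1 0 = 0 := by
        rcases mul_eq_zero.1 hr1 with h|h
        · exact h
        · exact absurd (by linarith : (τ 0 0 + τ 1 1)^2 = 1) ht2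
      have hps : τ 0 0 * τ 1 1 = 1 := by rw [hq, hr] at hδ; linarith
      have hp3 : τ 0 0 ^ 3 = 1 := by rw [hq, hr] at e00; linear_combination e00
      have hp : τ 0 0 = 1 := by
        have hfac : (τ 0 0 - 1) * ((τ 0 0)^2 + τ 0 0 + 1) = 0 := by linear_combination hp3
        have hexp : (2*τ 0 0+1)^2 = 4*(τ 0 0)^2 + 4*τ 0 0 + 1 := by ring
        have hpos : 0 < (τ 0 0)^2 + τ 0 0 + 1 := by linarith [sq_nonneg (2*τ 0 0+1), hexp]
        rcases mul_eq_zero.1 hfac with h|h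
        · linarith
        · linarith
      have hs : τ 1 1 = 1 := by rw [hp] at hps; linarith
      rw [hp, hq, hr, hs] at e20 e21
      have hu : τ 2 0 = 0 := by linarith [e20]
      have hv : τ 2 1 = 0 := by linarith [e21]
      have ht22' : τ 2 2 = 1 := by rw [ht22, hp, hq, hr, hs]; ring
      apply hτne
      ext i j
      fin_cases i <;> fin_cases j <;> simp [Matrix.one_apply] <;> assumption
  -- σ analysis
  by_cases had : σ 0 0 + σ 1 1 = 0
  · exfalso
    have hd : σ 1 1 = -σ 0 0 := by linarith
    have hX : 2*σ 0 0*τ 0 1 = σ 0 1*(τ 0 0 - τ 1 1) := by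
      linear_combination g2 + τ 0 1 * hd
    have hY : 2*σ 0 0*τ 1 0 = σ 1 0*(τ 0 0 - τ 1 1) := by
      linear_combination -g3 + τ 1 0 * hd
    have h1 : 4*σ 0 0^2*(τ 0 1*τ 1 0) = σ 0 1*σ 1 0*(τ 0 0 - τ 1 1)^2 := by
      linear_combination (2*σ 0 0*τ 1 0) * hX + (σ 0 1*(τ 0 0 - τ 1 1)) * hY
    have hps2 : (τ 0 0 - τ 1 1)^2 = -3 - 4*(τ 0 1*τ 1 0) := by
      linear_combination (τ 0 0 + τ 1 1 - 1) * htr - 4*hδ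
    have hqr : 4*(τ 0 1*τ 1 0) = 3*σ 0 0^2 - 3 := by
      linear_combination h1 + (1 - σ 0 0^2) * hps2 + (τ 0 0 - τ 1 1)^2 * f00
    have hps0 : (τ 0 0 - τ 1 1)^2 = -3*σ 0 0^2 := by linear_combination hps2 - hqr
    have ha00 : σ 0 0 ^ 2 = 0 := by
      linarith [hps0, sq_nonneg (τ 0 0 - τ 1 1), sq_nonneg (σ 0 0)]
    have ha0 : σ 0 0 = 0 := by
      have := sq_eq_zero_iff.mp ha00
      exact this
    have hbc : σ 0 1*σ 1 0 = 1 := by linear_combination f00 - σ 0 0 * ha0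
    have hqr' : τ 0 1*τ 1 0 = -(3/4) := by
      linear_combination (1/4)*hqr + (3/4)*σ 0 0 * ha0
    have key : (τ 0 1*σ 1 0)^2 = τ 0 1*τ 1 0*(σ 0 1*σ 1 0) := by
      linear_combination -(τ 0 1 * σ 1 0) * g1
    rw [hbc, hqr'] at key
    have := sq_nonneg (τ 0 1*σ 1 0)
    linarith
  · have hb : σ 0 1 = 0 := by
      have h' : σ 0 1 * (σ 0 0 + σ 1 1) = 0 := by linear_combination f01
      rcases mul_eq_zero.1 h' with h|h
      · exact h
      · exact absurd h had
    have hc : σ 1 0 = 0 := by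
      have h' : σ 1 0 * (σ 0 0 + σ 1 1) = 0 := by linear_combination f10
      rcases mul_eq_zero.1 h' with h|h
      · exact h
      · exact absurd h had
    by_cases hadq : σ 0 0 = σ 1 1
    · have h' : (σ 0 0 - 1) * (σ 0 0 + 1) = 0 := by
        linear_combination f00 - σ 1 0 * hb
      rcases mul_eq_zero.1 h' with h|h
      · exfalso
        have ha1 : σ 0 0 = 1 := by linarith
        have hd1 : σ 1 1 = 1 := by rw [← hadq]; exact ha1
        rw [ha1, hd1, hb, hc] at f20 f21
        have he : σ 2 0 = 0 := by linarith [f20]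
        have hf : σ 2 1 = 0 := by linarith [f21]
        have hs22' : σ 2 2 = 1 := by rw [hs22, ha1, hd1, hb, hc]; ring
        apply hσne
        ext i j
        fin_cases i <;> fin_cases j <;> simp [Matrix.one_apply] <;> assumption
      · have ha1 : σ 0 0 = -1 := by linarith
        have hd1 : σ 1 1 = -1 := by rw [← hadq]; exact ha1
        have hs22' : σ 2 2 = 1 := by rw [hs22, ha1, hd1, hb, hc]; ring
        refine ⟨σ 2 0, σ 2 1, ?_⟩
        ext i j
        fin_cases i <;> fin_cases j <;> simp [tau4] <;> assumption
    · exfalso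
      have hq : τ 0 1 = 0 := by
        have h' : τ 0 1 * (σ 0 0 - σ 1 1) = 0 := by
          rw [hb] at g2; linear_combination g2
        rcases mul_eq_zero.1 h' with h|h
        · exact h
        · exact absurd (by linarith : σ 0 0 = σ 1 1) hadq
      have hr : τ 1 0 = 0 := by
        have h' : τ 1 0 * (σ 1 1 - σ 0 0) = 0 := by
          rw [hc] at g3; linear_combination g3
        rcases mul_eq_zero.1 h' with h|h
        · exact h
        · exact absurd (by linarith : σ 0 0 = σ 1 1) hadq
      rw [hq, hr] at hδ
      have hcontra : (2 * τ 0 0 + 1)^2 = -3 := by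
        linear_combination -4*hδ + 4*τ 0 0 * htr
      linarith [sq_nonneg (2 * τ 0 0 + 1)]
end

section
/- Aut(𝔥₃) contains no abelian subgroup isomorphic to ℤ₃ × ℤ₃: if τ, τ' are commuting automorphisms of 𝔥₃ of order dividing 3 generating an abelian group, then the subgroup ⟨τ,τ'⟩ is cyclic of order 1 or 3. -/
lemma heis_pattern {M : Matrix (Fin 3) (Fin 3) ℝ} (h : IsHeisAut M) :
    M 0 2 = 0 ∧ M 1 2 = 0 ∧ M 2 2 = M 0 0 * M 1 1 - M 1 0 * M 0 1 := by
  have h0 := congrFun (h.2 ![1,0,0] ![0,1,0]) 0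
  have h1 := congrFun (h.2 ![1,0,0] ![0,1,0]) 1
  have h2 := congrFun (h.2 ![1,0,0] ![0,1,0]) 2
  simp [heisBracket, Matrix.mulVec, dotProduct, Fin.sum_univ_three] at h0 h1 h2
  exact ⟨h0, h1, by linarith⟩

lemma unip_matrix_eq_one {M : Matrix (Fin 3) (Fin 3) ℝ}
    (hM3 : M * M * M = 1)
    (h00 : M 0 0 = 1) (h01 : M 0 1 = 0) (h02 : M 0 2 = 0)
    (h10 : M 1 0 = 0) (h11 : M 1 1 = 1) (h12 : M 1 2 = 0) : M = 1 := by
  have E : ∀ i j, (M * M * M) i j = (1 : Matrix (Fin 3) (Fin 3) ℝ) i j := fun i j =>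
    congrFun (congrFun hM3 i) j
  have e22 := E 2 2
  simp [Matrix.mul_apply, Fin.sum_univ_three, Matrix.one_apply, h00, h01, h02, h10, h11, h12] at e22
  have he : M 2 2 = 1 := by nlinarith [sq_nonneg (M 2 2 - 1), sq_nonneg (M 2 2 + 1), e22]
  have e20 := E 2 0
  have e21 := E 2 1
  simp [Matrix.mul_apply, Fin.sum_univ_three, Matrix.one_apply, h00, h01, h02, h10, h11, h12, he] at e20 e21
  have h20 : M 2 0 = 0 := by linarith
  have h21 : M 2 1 = 0 := by linarith
  ext i j
  fin_cases i <;> fin_cases j <;>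
    simp [h00, h01, h02, h10, h11, h12, h20, h21, he, Matrix.one_apply]

lemma unip_eq_one {w : (Matrix (Fin 3) (Fin 3) ℝ)ˣ}
    (h3 : w ^ 3 = 1)
    (h00 : (w : Matrix (Fin 3) (Fin 3) ℝ) 0 0 = 1)
    (h01 : (w : Matrix (Fin 3) (Fin 3) ℝ) 0 1 = 0)
    (h02 : (w : Matrix (Fin 3) (Fin 3) ℝ) 0 2 = 0)
    (h10 : (w : Matrix (Fin 3) (Fin 3) ℝ) 1 0 = 0)
    (h11 : (w : Matrix (Fin 3) (Fin 3) ℝ) 1 1 = 1)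
    (h12 : (w : Matrix (Fin 3) (Fin 3) ℝ) 1 2 = 0) : w = 1 := by
  have hM3 : (w : Matrix (Fin 3) (Fin 3) ℝ) * w * w = 1 := by
    have : ((w ^ 3 : (Matrix (Fin 3) (Fin 3) ℝ)ˣ) : Matrix (Fin 3) (Fin 3) ℝ) = 1 := by
      rw [h3]; rfl
    simpa [pow_succ, mul_assoc] using this
  exact Units.ext (unip_matrix_eq_one hM3 h00 h01 h02 h10 h11 h12)

lemma sl2_cube {a b c d : ℝ}
    (hdet : a*d - b*c = 1)
    (hq1 : (a*a+b*c)*a + (a*b+b*d)*c = 1)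
    (hq2 : (a*a+b*c)*b + (a*b+b*d)*d = 0)
    (hq3 : (c*a+d*c)*a + (c*b+d*d)*c = 0)
    (hq4 : (c*a+d*c)*b + (c*b+d*d)*d = 1) :
    (a = 1 ∧ b = 0 ∧ c = 0 ∧ d = 1) ∨ a + d = -1 := by
  have k1 : ((a+d)^2 - 1)*a - (a+d) = 1 := by linear_combination hq1 + (2*a+d)*hdet
  have k2 : ((a+d)^2 - 1)*b = 0 := by linear_combination hq2 + b*hdet
  have k3 : ((a+d)^2 - 1)*c = 0 := by linear_combination hq3 + c*hdet
  have k4 : ((a+d)^2 - 1)*d - (a+d) = 1 := by linear_combination hq4 + (2*d+a)*hdet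
  have ht : (a+d+1)^2 * (a+d-2) = 0 := by linear_combination k1 + k4
  rcases mul_eq_zero.mp ht with h | h
  · right
    have := pow_eq_zero_iff (n := 2) (by norm_num) |>.mp h
    linarith
  · left
    have had : d = 2 - a := by linarith
    subst had
    exact ⟨by nlinarith [k1], by nlinarith [k2], by nlinarith [k3], by nlinarith [k1]⟩

lemma comm_dichotomy {a b c d a' b' c' d' : ℝ}
    (hdet : a*d - b*c = 1) (hdet' : a'*d' - b'*c' = 1)
    (htr : a + d = -1) (htr' : a' + d' = -1)
    (e1 : b*c' = c*b')
    (e2 : a*b' + b*d' = a'*b + b'*d) :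
    (a' = a ∧ b' = b ∧ c' = c ∧ d' = d) ∨
    (a' = -1-a ∧ b' = -b ∧ c' = -c ∧ d' = -1-d) := by
  have hd : d = -1 - a := by linarith
  have hd' : d' = -1 - a' := by linarith
  subst hd hd'
  have hb : b*c = -(a^2+a+1) := by linear_combination -hdet
  have hbne : b ≠ 0 := by
    intro h
    rw [h] at hb
    nlinarith [sq_nonneg (2*a+1)]
  obtain ⟨t, htb⟩ : ∃ t, b' = t * b := ⟨b'/b, (div_mul_cancel₀ b' hbne).symm⟩
  subst htb
  have hc' : c' = t * c := by
    apply mul_left_cancel₀ hbne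
    linear_combination e1
  subst hc'
  have ha' : a' = (t*(2*a+1)-1)/2 := by
    have h2 : b * (2*a'+1) = b * (t*(2*a+1)) := by linear_combination -e2
    have := mul_left_cancel₀ hbne h2
    linarith
  subst ha'
  have ht2 : t^2 = 1 := by linear_combination (4/3)*hdet' + (4/3)*t^2*hb
  have : (t-1)*(t+1) = 0 := by linear_combination ht2
  rcases mul_eq_zero.mp this with h | h
  · have ht1 : t = 1 := by linarith
    subst ht1
    exact Or.inl ⟨by ring, by ring, by ring, by ring⟩
  · have ht1 : t = -1 := by linarith
    subst ht1
    exact Or.inr ⟨by ring, by ring, by ring, by ring⟩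

lemma endgame {G : Type*} [Group G] (u v g : G) (hg : g ^ 3 = 1)
    (hug : u ∈ Subgroup.zpowers g) (hvg : v ∈ Subgroup.zpowers g)
    (hgc : g ∈ Subgroup.closure {u, v}) :
    IsCyclic (Subgroup.closure {u, v}) ∧
    (Nat.card (Subgroup.closure {u, v}) = 1 ∨
      Nat.card (Subgroup.closure {u, v}) = 3) := by
  have he : Subgroup.closure {u, v} = Subgroup.zpowers g := by
    apply le_antisymm
    · rw [Subgroup.closure_le]
      rintro x (rfl | rfl) <;> assumption
    · exact Subgroup.zpowers_le.mpr hgc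
  rw [he]
  refine ⟨⟨⟨g, Subgroup.mem_zpowers g⟩, fun x => ?_⟩, ?_⟩
  · obtain ⟨n, hn⟩ := Subgroup.mem_zpowers_iff.mp x.2
    exact ⟨n, Subtype.ext (by simpa using hn)⟩
  · rw [Nat.card_zpowers]
    exact (Nat.prime_three).eq_one_or_self_of_dvd _ (orderOf_dvd_of_pow_eq_one hg)

set_option maxHeartbeats 2000000

/-- `Aut(𝔥₃)` contains no subgroup isomorphic to `ℤ₃ × ℤ₃`: if `τ, τ'` are
commuting automorphisms of `𝔥₃` of order dividing 3, then the subgroup they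
generate is cyclic of order 1 or 3. -/
theorem no_Z3_squared_in_heisAut (u v : (Matrix (Fin 3) (Fin 3) ℝ)ˣ)
    (hu : IsHeisAut (u : Matrix (Fin 3) (Fin 3) ℝ))
    (hv : IsHeisAut (v : Matrix (Fin 3) (Fin 3) ℝ))
    (hu3 : u ^ 3 = 1) (hv3 : v ^ 3 = 1) (hcomm : u * v = v * u) :
    IsCyclic (Subgroup.closure {u, v}) ∧
    (Nat.card (Subgroup.closure {u, v}) = 1 ∨
      Nat.card (Subgroup.closure {u, v}) = 3) := by
  set M : Matrix (Fin 3) (Fin 3) ℝ := (u : Matrix (Fin 3) (Fin 3) ℝ) with hMdef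
  set N : Matrix (Fin 3) (Fin 3) ℝ := (v : Matrix (Fin 3) (Fin 3) ℝ) with hNdef
  obtain ⟨hu02, hu12, hu22⟩ := heis_pattern hu
  obtain ⟨hv02, hv12, hv22⟩ := heis_pattern hv
  have hM3 : M * M * M = 1 := by
    have : ((u ^ 3 : (Matrix (Fin 3) (Fin 3) ℝ)ˣ) : Matrix (Fin 3) (Fin 3) ℝ) = 1 := by
      rw [hu3]; rfl
    simpa [pow_succ, mul_assoc] using this
  have hN3 : N * N * N = 1 := by
    have : ((v ^ 3 : (Matrix (Fin 3) (Fin 3) ℝ)ˣ) : Matrix (Fin 3) (Fin 3) ℝ) = 1 := by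
      rw [hv3]; rfl
    simpa [pow_succ, mul_assoc] using this
  -- entry equations of M^3 = 1
  have EM : ∀ i j, (M * M * M) i j = (1 : Matrix (Fin 3) (Fin 3) ℝ) i j := fun i j =>
    congrFun (congrFun hM3 i) j
  have EN : ∀ i j, (N * N * N) i j = (1 : Matrix (Fin 3) (Fin 3) ℝ) i j := fun i j =>
    congrFun (congrFun hN3 i) j
  have em00 := EM 0 0; have em01 := EM 0 1; have em10 := EM 1 0
  have em11 := EM 1 1; have em22 := EM 2 2
  simp [Matrix.mul_apply, Fin.sum_univ_three, Matrix.one_apply, hu02, hu12]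
    at em00 em01 em10 em11 em22
  have en00 := EN 0 0; have en01 := EN 0 1; have en10 := EN 1 0
  have en11 := EN 1 1; have en22 := EN 2 2
  simp [Matrix.mul_apply, Fin.sum_univ_three, Matrix.one_apply, hv02, hv12]
    at en00 en01 en10 en11 en22
  -- M 2 2 = 1, so det of top block is 1
  have heM : M 2 2 = 1 := by nlinarith [sq_nonneg (M 2 2 - 1), sq_nonneg (M 2 2 + 1), em22]
  have heN : N 2 2 = 1 := by nlinarith [sq_nonneg (N 2 2 - 1), sq_nonneg (N 2 2 + 1), en22]
  have hdetM : M 0 0 * M 1 1 - M 0 1 * M 1 0 = 1 := by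
    rw [heM] at hu22; linarith [hu22]
  have hdetN : N 0 0 * N 1 1 - N 0 1 * N 1 0 = 1 := by
    rw [heN] at hv22; linarith [hv22]
  -- trichotomy for u
  have hcubeM := sl2_cube (a := M 0 0) (b := M 0 1) (c := M 1 0) (d := M 1 1) hdetM
    (by linear_combination em00) (by linear_combination em01)
    (by linear_combination em10) (by linear_combination em11)
  have hcubeN := sl2_cube (a := N 0 0) (b := N 0 1) (c := N 1 0) (d := N 1 1) hdetN
    (by linear_combination en00) (by linear_combination en01)
    (by linear_combination en10) (by linear_combination en11)
  rcases hcubeM with ⟨ha, hb, hc, hd⟩ | htrM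
  · -- u = 1
    have hu1 : u = 1 := unip_eq_one hu3 ha hb hu02 hc hd hu12
    exact endgame u v v hv3 (by rw [hu1]; exact (Subgroup.zpowers v).one_mem)
      (Subgroup.mem_zpowers v) (Subgroup.subset_closure (by simp))
  rcases hcubeN with ⟨ha, hb, hc, hd⟩ | htrN
  · -- v = 1
    have hv1 : v = 1 := unip_eq_one hv3 ha hb hv02 hc hd hv12
    exact endgame u v u hu3 (Subgroup.mem_zpowers u)
      (by rw [hv1]; exact (Subgroup.zpowers u).one_mem)
      (Subgroup.subset_closure (by simp))
  -- both top blocks have trace -1; use commutation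
  have hMN : M * N = N * M := by
    have := congrArg (Units.val) hcomm
    simpa using this
  have c00 := congrFun (congrFun hMN 0) 0
  have c01 := congrFun (congrFun hMN 0) 1
  simp [Matrix.mul_apply, Fin.sum_univ_three, hu02, hu12, hv02, hv12] at c00 c01
  have hdich := comm_dichotomy (a := M 0 0) (b := M 0 1) (c := M 1 0) (d := M 1 1)
    (a' := N 0 0) (b' := N 0 1) (c' := N 1 0) (d' := N 1 1)
    hdetM hdetN htrM htrN (by linear_combination c00) (by linear_combination c01)
  have huuu : u * u * u = 1 := by
    have : u ^ 3 = u * u * u := by rw [pow_succ, pow_succ, pow_one]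
    rw [← this, hu3]
  have hcvu : Commute v u := hcomm.symm
  rcases hdich with ⟨ha, hb, hc, hd⟩ | ⟨ha, hb, hc, hd⟩
  · -- N top block = M top block: v * u * u = 1, so v = u
    have hw3 : (v * (u * u)) ^ 3 = 1 := by
      rw [(hcvu.mul_right hcvu).mul_pow]
      have : (u * u) ^ 3 = 1 := by
        rw [← sq, ← pow_mul]
        norm_num
        rw [show (6 : ℕ) = 3 * 2 by norm_num, pow_mul, hu3, one_pow]
      rw [this, hv3, one_mul]
    have key : ∀ i j, ((v * (u * u) : (Matrix (Fin 3) (Fin 3) ℝ)ˣ) : Matrix (Fin 3) (Fin 3) ℝ) i j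
        = (N * (M * M)) i j := by intro i j; simp [hMdef, hNdef, mul_assoc]
    have hw : v * (u * u) = 1 := by
      apply unip_eq_one hw3
      · rw [key 0 0]
        simp only [Matrix.mul_apply, Fin.sum_univ_three, ha, hb, hc, hd, hu02, hu12, hv02,
          hv12, mul_zero, zero_mul, add_zero, zero_add]
        linear_combination em00
      · rw [key 0 1]
        simp only [Matrix.mul_apply, Fin.sum_univ_three, ha, hb, hc, hd, hu02, hu12, hv02,
          hv12, mul_zero, zero_mul, add_zero, zero_add]
        linear_combination em01
      · rw [key 0 2]
        simp only [Matrix.mul_apply, Fin.sum_univ_three, ha, hb, hc, hd, hu02, hu12, hv02,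
          hv12, mul_zero, zero_mul, add_zero, zero_add]
      · rw [key 1 0]
        simp only [Matrix.mul_apply, Fin.sum_univ_three, ha, hb, hc, hd, hu02, hu12, hv02,
          hv12, mul_zero, zero_mul, add_zero, zero_add]
        linear_combination em10
      · rw [key 1 1]
        simp only [Matrix.mul_apply, Fin.sum_univ_three, ha, hb, hc, hd, hu02, hu12, hv02,
          hv12, mul_zero, zero_mul, add_zero, zero_add]
        linear_combination em11
      · rw [key 1 2]
        simp only [Matrix.mul_apply, Fin.sum_univ_three, ha, hb, hc, hd, hu02, hu12, hv02,
          hv12, mul_zero, zero_mul, add_zero, zero_add]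
    have hvu : v = u := by
      calc v = v * (u * u * u) := by rw [huuu, mul_one]
        _ = v * (u * u) * u := (mul_assoc v (u*u) u).symm
        _ = u := by rw [hw, one_mul]
    exact endgame u v u hu3 (Subgroup.mem_zpowers u)
      (by rw [hvu]; exact Subgroup.mem_zpowers u)
      (Subgroup.subset_closure (by simp))
  · -- N top block = M top block squared: v * u = 1, so v = u⁻¹
    have hw3 : (v * u) ^ 3 = 1 := by
      rw [hcvu.mul_pow, hv3, hu3, one_mul]
    have key : ∀ i j, ((v * u : (Matrix (Fin 3) (Fin 3) ℝ)ˣ) : Matrix (Fin 3) (Fin 3) ℝ) i j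
        = (N * M) i j := by intro i j; simp [hMdef, hNdef]
    have hw : v * u = 1 := by
      apply unip_eq_one hw3
      · rw [key 0 0]
        simp only [Matrix.mul_apply, Fin.sum_univ_three]
        rw [ha, hb, hv02]
        linear_combination hdetM - M 0 0 * htrM
      · rw [key 0 1]
        simp only [Matrix.mul_apply, Fin.sum_univ_three]
        rw [ha, hb, hv02]
        linear_combination -(M 0 1) * htrM
      · rw [key 0 2]
        simp only [Matrix.mul_apply, Fin.sum_univ_three]
        rw [ha, hb, hv02, hu02, hu12]
        ring
      · rw [key 1 0]
        simp only [Matrix.mul_apply, Fin.sum_univ_three]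
        rw [hc, hd, hv12]
        linear_combination -(M 1 0) * htrM
      · rw [key 1 1]
        simp only [Matrix.mul_apply, Fin.sum_univ_three]
        rw [hc, hd, hv12]
        linear_combination hdetM - M 1 1 * htrM
      · rw [key 1 2]
        simp only [Matrix.mul_apply, Fin.sum_univ_three]
        rw [hc, hd, hv12, hu02, hu12]
        ring
    have hvinv : v = u⁻¹ := eq_inv_of_mul_eq_one_left hw
    exact endgame u v u hu3 (Subgroup.mem_zpowers u)
      (by rw [hvinv]; exact (Subgroup.zpowers u).inv_mem (Subgroup.mem_zpowers u))
      (Subgroup.subset_closure (by simp))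
end

section
/- For the ℤ₂×ℤ₂-grading of 𝔥₃ determined by the group Γ₇(α₃,α₅,α₆), the simultaneous eigenspace decomposition is 𝔥₃ = {0} ⊕ ℝ(X₂ + (α₆/2)X₃) ⊕ ℝ(X₁ − (α₃/2)X₂ + (α₅/2)X₃) ⊕ ℝX₃, i.e., these three lines are the joint eigenspaces of (τ₁,τ₂) with eigenvalue pairs (+,−), (−,+), (−,−), and the (+,+)-eigenspace is zero. -/
lemma vec3_eq_iff (x y : Fin 3 → ℝ) : x = y ↔ x 0 = y 0 ∧ x 1 = y 1 ∧ x 2 = y 2 := by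
  constructor
  · rintro rfl; exact ⟨rfl, rfl, rfl⟩
  · rintro ⟨h0, h1, h2⟩; funext i; fin_cases i <;> assumption

lemma tau1_app (a3 a6 : ℝ) (x y : Fin 3 → ℝ) :
    (tau1 a3 a6).mulVec x = y ↔
      -x 0 = y 0 ∧ a3 * x 0 + x 1 = y 1 ∧
        a3 * a6 / 2 * x 0 + a6 * x 1 + -x 2 = y 2 := by
  rw [vec3_eq_iff]
  simp only [tau1, Matrix.mulVec, dotProduct, Fin.sum_univ_three, Matrix.of_apply,
    Matrix.cons_val', Matrix.cons_val_zero, Matrix.cons_val_one, Matrix.head_cons,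
    Matrix.empty_val', Matrix.cons_val_fin_one, Matrix.head_fin_const, Matrix.cons_val_two,
    Matrix.tail_cons]
  constructor <;> rintro ⟨h0, h1, h2⟩ <;> exact ⟨by linarith, by linarith, by linarith⟩

lemma tau2_app (a3 a5 : ℝ) (x y : Fin 3 → ℝ) :
    (tau2 a3 a5).mulVec x = y ↔
      x 0 = y 0 ∧ a3 * x 0 + -x 1 = y 1 ∧ a5 * x 0 + -x 2 = y 2 := by
  rw [vec3_eq_iff]
  simp only [tau2, Matrix.mulVec, dotProduct, Fin.sum_univ_three, Matrix.of_apply,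
    Matrix.cons_val', Matrix.cons_val_zero, Matrix.cons_val_one, Matrix.head_cons,
    Matrix.empty_val', Matrix.cons_val_fin_one, Matrix.head_fin_const, Matrix.cons_val_two,
    Matrix.tail_cons]
  constructor <;> rintro ⟨h0, h1, h2⟩ <;> exact ⟨by linarith, by linarith, by linarith⟩

/-- For the `ℤ₂×ℤ₂`-grading of `𝔥₃` given by `Γ₇(α₃,α₅,α₆)`: the joint
`(+,+)`-eigenspace of `(τ₁(α₃,α₆), τ₂(-α₃,α₅))` is zero and the joint
`(+,-)`, `(-,+)`, `(-,-)` eigenspaces are the lines `ℝ(X₂ + (α₆/2)X₃)`,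
`ℝ(X₁ - (α₃/2)X₂ + (α₅/2)X₃)` and `ℝX₃`. -/
theorem gamma7_grading (a3 a5 a6 : ℝ) :
    {x : Fin 3 → ℝ | (tau1 a3 a6).mulVec x = x ∧ (tau2 (-a3) a5).mulVec x = x}
      = {0} ∧
    {x : Fin 3 → ℝ | (tau1 a3 a6).mulVec x = x ∧ (tau2 (-a3) a5).mulVec x = -x}
      = ↑(Submodule.span ℝ {![(0:ℝ), 1, a6 / 2]}) ∧
    {x : Fin 3 → ℝ | (tau1 a3 a6).mulVec x = -x ∧ (tau2 (-a3) a5).mulVec x = x}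
      = ↑(Submodule.span ℝ {![(1:ℝ), -a3 / 2, a5 / 2]}) ∧
    {x : Fin 3 → ℝ | (tau1 a3 a6).mulVec x = -x ∧ (tau2 (-a3) a5).mulVec x = -x}
      = ↑(Submodule.span ℝ {![(0:ℝ), 0, 1]}) := by
  refine ⟨?_, ?_, ?_, ?_⟩ <;> ext x <;>
    simp only [Set.mem_setOf_eq, tau1_app, tau2_app, Pi.neg_apply] <;>
    simp only [Set.mem_singleton_iff, SetLike.mem_coe, Submodule.mem_span_singleton,
      vec3_eq_iff, Pi.smul_apply, smul_eq_mul, Matrix.cons_val_zero, Matrix.cons_val_one,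
      Matrix.head_cons, Matrix.cons_val_two, Matrix.tail_cons, Pi.zero_apply, Pi.neg_apply]
  · constructor
    · rintro ⟨⟨h0, h1, h2⟩, h3, h4, h5⟩
      refine ⟨by linear_combination -h0/2, by linear_combination -h4/2 + a3/4 * h0, ?_⟩
      linear_combination -h5/2 - a5/4 * h0
    · rintro ⟨h0, h1, h2⟩
      refine ⟨⟨?_, ?_, ?_⟩, ?_, ?_, ?_⟩ <;> simp only [h0, h1, h2] <;> ring
  · constructor
    · rintro ⟨⟨h0, h1, h2⟩, h3, h4, h5⟩
      exact ⟨x 1, by linear_combination h0/2, by ring,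
        by linear_combination h2/2 + a3*a6/8 * h0⟩
    · rintro ⟨c, h0, h1, h2⟩
      refine ⟨⟨?_, ?_, ?_⟩, ?_, ?_, ?_⟩ <;> simp only [← h0, ← h1, ← h2] <;> ring
  · constructor
    · rintro ⟨⟨h0, h1, h2⟩, h3, h4, h5⟩
      exact ⟨x 0, by ring, by linear_combination -h1/2, by linear_combination h5/2⟩
    · rintro ⟨c, h0, h1, h2⟩
      refine ⟨⟨?_, ?_, ?_⟩, ?_, ?_, ?_⟩ <;> simp only [← h0, ← h1, ← h2] <;> ring
  · constructor
    · rintro ⟨⟨h0, h1, h2⟩, h3, h4, h5⟩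
      exact ⟨x 2, by linear_combination -h3/2, by linear_combination -h1/2 + a3/4 * h3,
        by ring⟩
    · rintro ⟨c, h0, h1, h2⟩
      refine ⟨⟨?_, ?_, ?_⟩, ?_, ?_, ?_⟩ <;> simp only [← h0, ← h1, ← h2] <;> ring
end

section
/- For any α₃,α₅,α₆ ∈ ℝ, the automorphism σ of 𝔥₃ with matrix [[1,0,0],[−α₃/2,1,0],[α₅/2,α₆/2,1]] satisfies σ⁻¹ τ₁(α₃,α₆) σ = τ₁(0,0) and σ⁻¹ τ₂(−α₃,α₅) σ = τ₂(0,0). Hence every subgroup Γ₇(α₃,α₅,α₆) of Aut(𝔥₃) is conjugate in Aut(𝔥₃) to Γ₇(0,0,0) = {Id, diag(−1,1,−1), diag(1,−1,−1), diag(−1,−1,1)}. -/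
set_option maxHeartbeats 1000000 in
/-- The automorphism `σ = [[1,0,0],[-α₃/2,1,0],[α₅/2,α₆/2,1]]` satisfies
`σ⁻¹ τ₁(α₃,α₆) σ = τ₁(0,0)` and `σ⁻¹ τ₂(-α₃,α₅) σ = τ₂(0,0)`; hence
`Γ₇(α₃,α₅,α₆)` is conjugate in `Aut(𝔥₃)` to
`Γ₇(0,0,0) = {Id, diag(-1,1,-1), diag(1,-1,-1), diag(-1,-1,1)}`. -/
theorem gamma7_conjugate (a3 a5 a6 : ℝ)
    (σ : Matrix (Fin 3) (Fin 3) ℝ)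
    (hσ : σ = !![1, 0, 0; -a3 / 2, 1, 0; a5 / 2, a6 / 2, 1]) :
    IsHeisAut σ ∧
    σ⁻¹ * tau1 a3 a6 * σ = tau1 0 0 ∧
    σ⁻¹ * tau2 (-a3) a5 * σ = tau2 0 0 ∧
    (fun M => σ⁻¹ * M * σ) ''
        {1, tau1 a3 a6, tau2 (-a3) a5, tau4 (-a3 * a6 / 2 - a5) (-a6)} =
      {1, tau1 0 0, tau2 0 0, tau4 0 0} := by
  have hinv : σ⁻¹ = !![1, 0, 0; a3 / 2, 1, 0; -a5/2 - a3*a6/4, -a6/2, 1] := by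
    rw [Matrix.inv_eq_right_inv]
    subst hσ
    ext i j
    fin_cases i <;> fin_cases j <;>
      simp [Matrix.mul_apply, Fin.sum_univ_three, Matrix.vecHead, Matrix.vecTail] <;> ring
  have hdet : σ.det = 1 := by
    subst hσ
    simp [Matrix.det_fin_three]
  refine ⟨⟨by rw [hdet]; norm_num, ?_⟩, ?_, ?_, ?_⟩
  · intro x y
    subst hσ
    funext i
    fin_cases i <;>
      simp [heisBracket, Matrix.mulVec, dotProduct, Fin.sum_univ_three, Matrix.vecHead, Matrix.vecTail] <;> ring
  · rw [hinv, hσ]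
    ext i j
    fin_cases i <;> fin_cases j <;>
      simp [tau1, Matrix.mul_apply, Fin.sum_univ_three, Matrix.vecHead, Matrix.vecTail] <;> ring
  · rw [hinv, hσ]
    ext i j
    fin_cases i <;> fin_cases j <;>
      simp [tau2, Matrix.mul_apply, Fin.sum_univ_three, Matrix.vecHead, Matrix.vecTail] <;> ring
  · have h1 : σ⁻¹ * 1 * σ = 1 := by
      rw [hinv, hσ]
      ext i j
      fin_cases i <;> fin_cases j <;>
        simp [Matrix.mul_apply, Matrix.one_apply, Fin.sum_univ_three, Matrix.vecHead, Matrix.vecTail] <;> ring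
    have h2 : σ⁻¹ * tau1 a3 a6 * σ = tau1 0 0 := by
      rw [hinv, hσ]
      ext i j
      fin_cases i <;> fin_cases j <;>
        simp [tau1, Matrix.mul_apply, Fin.sum_univ_three, Matrix.vecHead, Matrix.vecTail] <;> ring
    have h3 : σ⁻¹ * tau2 (-a3) a5 * σ = tau2 0 0 := by
      rw [hinv, hσ]
      ext i j
      fin_cases i <;> fin_cases j <;>
        simp [tau2, Matrix.mul_apply, Fin.sum_univ_three, Matrix.vecHead, Matrix.vecTail] <;> ring
    have h4 : σ⁻¹ * tau4 (-a3 * a6 / 2 - a5) (-a6) * σ = tau4 0 0 := by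
      rw [hinv, hσ]
      ext i j
      fin_cases i <;> fin_cases j <;>
        simp [tau4, Matrix.mul_apply, Fin.sum_univ_three, Matrix.vecHead, Matrix.vecTail] <;> ring
    simp only [Set.image_insert_eq, Set.image_singleton, h1, h2, h3, h4]
end

section
/- Let σ₁ = diag(−1,1,−1) and σ₂ = [[−1/2, α, 0],[−3/(4α), −1/2, 0],[0,0,1]] with α ≠ 0, viewed as automorphisms of 𝔥₃. Then σ₁² = Id, σ₂³ = Id, and σ₁σ₂σ₁ = σ₂²; hence the subgroup of Aut(𝔥₃) generated by σ₁ and σ₂ is isomorphic to the symmetric group S₃. -/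
namespace DihedralGroup

variable {G : Type*} [Group G] {n : ℕ} {a b : G}

theorem pow_val_add [NeZero n] (hb : b ^ n = 1) (i j : ZMod n) :
    b ^ (i + j).val = b ^ i.val * b ^ j.val := by
  rw [← pow_add, ZMod.val_add, ← pow_eq_pow_mod _ hb]

theorem pow_val_sub [NeZero n] (hb : b ^ n = 1) (i j : ZMod n) :
    b ^ (j - i).val = (b ^ i.val)⁻¹ * b ^ j.val := by
  rw [eq_inv_mul_iff_mul_eq, ← pow_val_add hb, add_sub_cancel]

theorem mul_pow_mul_eq_inv (ha : a ^ 2 = 1) (hab : a * b * a = b⁻¹) (k : ℕ) :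
    a * b ^ k * a = (b ^ k)⁻¹ := by
  have ha' : a⁻¹ = a := inv_eq_of_mul_eq_one_left (by rw [← sq, ha])
  calc a * b ^ k * a = (a * b * a⁻¹) ^ k := by rw [conj_pow, ha']
    _ = (b ^ k)⁻¹ := by rw [ha', hab, inv_pow]

variable [NeZero n]

def lift (ha : a ^ 2 = 1) (hb : b ^ n = 1) (hab : a * b * a = b⁻¹) : DihedralGroup n →* G where
  toFun
    | r i => b ^ i.val
    | sr i => a * b ^ i.val
  map_one' := by simp only [one_def, ZMod.val_zero, pow_zero]
  map_mul' := by
    have hconj := mul_pow_mul_eq_inv ha hab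
    have ha' : a * a = 1 := by rw [← sq, ha]
    rintro (i | i) (j | j)
    · simp only [r_mul_r, pow_val_add hb]
    · simp only [r_mul_sr, pow_val_sub hb, ← hconj, mul_assoc]
      rw [← mul_assoc a a, ha', one_mul]
    · simp only [sr_mul_r, pow_val_add hb, mul_assoc]
    · simp only [sr_mul_sr, pow_val_sub hb, ← hconj, mul_assoc]

section Lift

variable (ha : a ^ 2 = 1) (hb : b ^ n = 1) (hab : a * b * a = b⁻¹)

@[simp] theorem lift_r (i : ZMod n) : lift ha hb hab (r i) = b ^ i.val := rfl

@[simp] theorem lift_sr (i : ZMod n) : lift ha hb hab (sr i) = a * b ^ i.val := rfl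

theorem range_lift : (lift ha hb hab).range = Subgroup.closure {a, b} := by
  apply le_antisymm
  · have ha_mem : a ∈ Subgroup.closure {a, b} := Subgroup.subset_closure (.inl rfl)
    have hb_mem : b ∈ Subgroup.closure {a, b} := Subgroup.subset_closure (.inr rfl)
    rintro _ ⟨i | i, rfl⟩
    · exact pow_mem hb_mem _
    · exact mul_mem ha_mem (pow_mem hb_mem _)
  · rw [Subgroup.closure_le, Set.insert_subset_iff, Set.singleton_subset_iff]
    refine ⟨⟨sr 0, by simp⟩, ⟨r 1, ?_⟩⟩
    rw [lift_r, ZMod.val_one_eq_one_mod, ← pow_eq_pow_mod 1 hb, pow_one]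

theorem lift_injective (hn : 2 < n) (hord : orderOf b = n) :
    Function.Injective (lift ha hb hab) := by
  rw [injective_iff_map_eq_one]
  rintro (i | i) h
  · rw [lift_r, ← orderOf_dvd_iff_pow_eq_one, hord] at h
    rw [Nat.eq_zero_of_dvd_of_lt h (ZMod.val_lt i) |> (ZMod.val_eq_zero i).1, r_zero]
  · exfalso
    have hcomm : Commute a b :=
      eq_inv_of_mul_eq_one_left h ▸ ((Commute.refl b).pow_left _).inv_left
    have hb_inv : b⁻¹ = b := by rw [← hab, hcomm.eq, mul_assoc, ← sq, ha, mul_one]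
    have hb_sq : b ^ 2 = 1 := by rw [sq, mul_eq_one_iff_eq_inv, hb_inv]
    have := Nat.le_of_dvd two_pos (hord ▸ orderOf_dvd_of_pow_eq_one hb_sq)
    omega

end Lift

theorem nonempty_closure_mulEquiv (ha : a ^ 2 = 1) (hab : a * b * a = b⁻¹) (hn : 2 < n)
    (hord : orderOf b = n) : Nonempty (Subgroup.closure {a, b} ≃* DihedralGroup n) := by
  have hb : b ^ n = 1 := hord ▸ pow_orderOf_eq_one b
  exact ⟨(MulEquiv.subgroupCongr (range_lift ha hb hab).symm).trans
    (MonoidHom.ofInjective (lift_injective ha hb hab hn hord)).symm⟩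

end DihedralGroup

theorem DihedralGroup.nonempty_mulEquiv_perm_fin_three :
    Nonempty (DihedralGroup 3 ≃* Equiv.Perm (Fin 3)) := by
  have hord : orderOf (finRotate 3) = 3 := orderOf_eq_prime (by decide) (by decide)
  have hinj := lift_injective (a := Equiv.swap 0 1) (by decide) (by decide) (by decide)
    (by norm_num) hord
  have hcard : Fintype.card (DihedralGroup 3) = Fintype.card (Equiv.Perm (Fin 3)) := by
    rw [card, Fintype.card_perm, Fintype.card_fin]; rfl
  exact ⟨MulEquiv.ofBijective _ ((Fintype.bijective_iff_injective_and_card _).2 ⟨hinj, hcard⟩)⟩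

def sigmaOne : Matrix (Fin 3) (Fin 3) ℝ := !![-1, 0, 0; 0, 1, 0; 0, 0, -1]

noncomputable def sigmaTwo (α : ℝ) : Matrix (Fin 3) (Fin 3) ℝ :=
  !![-1 / 2, α, 0; -3 / (4 * α), -1 / 2, 0; 0, 0, 1]

theorem sigmaOne_sq : sigmaOne ^ 2 = 1 := by
  rw [sigmaOne, sq, Matrix.mul_fin_three, Matrix.one_fin_three]
  norm_num

theorem sigmaTwo_pow_three {α : ℝ} (hα : α ≠ 0) : sigmaTwo α ^ 3 = 1 := by
  ext i j
  fin_cases i <;> fin_cases j <;>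
    simp [sigmaTwo, pow_succ, Matrix.mul_apply, Fin.sum_univ_three] <;> field_simp <;> ring

theorem sigmaOne_mul_sigmaTwo_mul_sigmaOne {α : ℝ} (hα : α ≠ 0) :
    sigmaOne * sigmaTwo α * sigmaOne = sigmaTwo α ^ 2 := by
  ext i j
  fin_cases i <;> fin_cases j <;>
    simp [sigmaOne, sigmaTwo, sq, Matrix.mul_apply, Fin.sum_univ_three] <;> field_simp <;> ring

theorem sigmaTwo_ne_one (α : ℝ) : sigmaTwo α ≠ 1 := by
  intro h
  have := congrFun (congrFun h 0) 0
  norm_num [sigmaTwo] at this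

/-- For `σ₁ = diag(-1,1,-1)` and `σ₂ = [[-1/2,α,0],[-3/(4α),-1/2,0],[0,0,1]]`
(`α ≠ 0`), viewed as automorphisms of `𝔥₃`: `σ₁² = Id`, `σ₂³ = Id`,
`σ₁σ₂σ₁ = σ₂²`, and the subgroup of `Aut(𝔥₃)` they generate is isomorphic to
the symmetric group `S₃`. -/
theorem sigma_generate_S3 (α : ℝ) (hα : α ≠ 0)
    (u v : (Matrix (Fin 3) (Fin 3) ℝ)ˣ)
    (hu : (u : Matrix (Fin 3) (Fin 3) ℝ) = !![-1, 0, 0; 0, 1, 0; 0, 0, -1])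
    (hv : (v : Matrix (Fin 3) (Fin 3) ℝ) =
      !![-1 / 2, α, 0; -3 / (4 * α), -1 / 2, 0; 0, 0, 1]) :
    u ^ 2 = 1 ∧ v ^ 3 = 1 ∧ u * v * u = v ^ 2 ∧
    Nonempty (Subgroup.closure {u, v} ≃* Equiv.Perm (Fin 3)) := by
  have hu' : (u : Matrix (Fin 3) (Fin 3) ℝ) = sigmaOne := hu
  have hv' : (v : Matrix (Fin 3) (Fin 3) ℝ) = sigmaTwo α := hv
  have hu2 : u ^ 2 = 1 := by
    rw [← Units.val_eq_one, Units.val_pow_eq_pow_val, hu', sigmaOne_sq]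
  have hv3 : v ^ 3 = 1 := by
    rw [← Units.val_eq_one, Units.val_pow_eq_pow_val, hv', sigmaTwo_pow_three hα]
  have huvu : u * v * u = v ^ 2 := Units.ext <| by
    rw [Units.val_mul, Units.val_mul, Units.val_pow_eq_pow_val, hu', hv',
      sigmaOne_mul_sigmaTwo_mul_sigmaOne hα]
  have hv1 : v ≠ 1 := fun h => sigmaTwo_ne_one α (by rw [← hv', h, Units.val_one])
  have hv_sq : v ^ 2 = v⁻¹ := eq_inv_of_mul_eq_one_left (by rw [← pow_succ, hv3])
  obtain ⟨e⟩ := DihedralGroup.nonempty_closure_mulEquiv hu2 (huvu.trans hv_sq)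
    (by norm_num) (orderOf_eq_prime hv3 hv1)
  obtain ⟨f⟩ := DihedralGroup.nonempty_mulEquiv_perm_fin_three
  exact ⟨hu2, hv3, huvu, ⟨e.trans f⟩⟩
end

section
/- Any positive-definite quadratic form g = α₁ω₁² + α₂ω₂² + α₃ω₃² (α₁,α₂,α₃ > 0) on 𝔥₃ that is diagonal in the dual basis ω₁,ω₂,ω₃ is taken by some Lie algebra automorphism of 𝔥₃ to a form ω₁² + ω₂² + λ²ω₃² with λ ≠ 0; i.e., there is an automorphism σ of 𝔥₃ with g(σx, σy) = ⟨x,y⟩_λ where ⟨·,·⟩_λ has matrix diag(1,1,λ²) in the basis X₁,X₂,X₃. -/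
/-! Scaling `X₁, X₂` by `p, q` scales `X₃ = [X₁, X₂]` by `pq`, so `diag(p, q, pq)` is an
automorphism. Taking `p = α₁^(-1/2)` and `q = α₂^(-1/2)` normalises the first two coefficients,
and the third becomes `α₃ p² q² = λ²` with `λ = √α₃ · p q`. -/

theorem isHeisAut_diagonal {p q : ℝ} (hp : p ≠ 0) (hq : q ≠ 0) :
    IsHeisAut (Matrix.diagonal ![p, q, p * q]) := by
  refine ⟨by simp [Matrix.det_diagonal, Fin.prod_univ_three, hp, hq], fun x y => ?_⟩
  ext i
  fin_cases i <;> simp [heisBracket, Matrix.mulVec_diagonal]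
  ring

theorem mul_inv_sqrt_sq {a : ℝ} (ha : 0 < a) : a * (√a)⁻¹ ^ 2 = 1 := by
  rw [inv_pow, Real.sq_sqrt ha.le, mul_inv_cancel₀ ha.ne']

/-- Any positive-definite diagonal form `g = α₁ω₁² + α₂ω₂² + α₃ω₃²` on `𝔥₃` is
taken by some Lie algebra automorphism of `𝔥₃` to `ω₁² + ω₂² + λ²ω₃²` with `λ ≠ 0`. -/
theorem riemannian_normal_form (a1 a2 a3 : ℝ)
    (h1 : 0 < a1) (h2 : 0 < a2) (h3 : 0 < a3) :
    ∃ (σ : Matrix (Fin 3) (Fin 3) ℝ) (l : ℝ), IsHeisAut σ ∧ l ≠ 0 ∧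
      ∀ x y : Fin 3 → ℝ,
        a1 * σ.mulVec x 0 * σ.mulVec y 0 + a2 * σ.mulVec x 1 * σ.mulVec y 1 +
            a3 * σ.mulVec x 2 * σ.mulVec y 2 =
          x 0 * y 0 + x 1 * y 1 + l ^ 2 * (x 2 * y 2) := by
  set p := (√a1)⁻¹
  set q := (√a2)⁻¹
  have hp : a1 * p ^ 2 = 1 := mul_inv_sqrt_sq h1
  have hq : a2 * q ^ 2 = 1 := mul_inv_sqrt_sq h2
  have hl : a3 * (p * q) ^ 2 = (√a3 * (p * q)) ^ 2 := by rw [mul_pow √a3, Real.sq_sqrt h3.le]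
  refine ⟨Matrix.diagonal ![p, q, p * q], √a3 * (p * q),
    isHeisAut_diagonal (by positivity) (by positivity), by positivity, fun x y => ?_⟩
  simp only [Matrix.mulVec_diagonal, Matrix.cons_val_zero, Matrix.cons_val_one,
    Matrix.cons_val_two, Matrix.head_cons, Matrix.tail_cons]
  linear_combination (x 0 * y 0) * hp + (x 1 * y 1) * hq + (x 2 * y 2) * hl
end
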